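/- arXiv:math/0612373 — 2 statements merged into one kernel-verified Lean document; each statement's English description precedes it below -/
import Mathlib

section
/- For all real x, y, z arising as pairwise overlaps of three spin configurations (i.e. satisfying 1+x ≥ |y+z| and 1-x ≥ |y-z|), the function J⁽²⁾(x,y,z) = ((1+x+y+z)/4)·log(1+x+y+z) + ((1+x-y-z)/4)·log(1+x-y-z) + ((1-x+y-z)/4)·log(1-x+y-z) + ((1-x-y+z)/4)·log(1-x-y+z) satisfies J⁽²⁾(x,y,z) ≥ (x² + y² + z²)/4. -/
lemma tlog_key (t : ℝ) (h0 : 0 ≤ t) (h4 : t ≤ 4) :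
    (t ^ 2 + 2 * t - 3) / 4 ≤ t * Real.log t := by
  rcases eq_or_lt_of_le h0 with h | h0
  · rw [← h]; norm_num
  rcases le_or_gt t 1 with hA | hB
  · -- Case A: 0 < t ≤ 1, use s = sqrt t
    set s := Real.sqrt t with hs
    have hs0 : 0 < s := Real.sqrt_pos.2 h0
    have hs2 : s ^ 2 = t := Real.sq_sqrt h0.le
    have hs1 : s ≤ 1 := by nlinarith
    have hl : 1 - s⁻¹ ≤ Real.log s := Real.one_sub_inv_le_log_of_pos hs0
    have hlog : Real.log t = 2 * Real.log s := by
      rw [hs, Real.log_sqrt h0.le]; ring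
    have key : 2 * s ^ 2 - 2 * s ≤ t * Real.log t := by
      rw [hlog, ← hs2]
      have h1 : s ^ 2 * (1 - s⁻¹) = s ^ 2 - s := by field_simp
      nlinarith [mul_le_mul_of_nonneg_left hl (by positivity : (0:ℝ) ≤ 2 * s ^ 2)]
    nlinarith [mul_nonneg (mul_nonneg (mul_nonneg (sub_nonneg.2 hs1) (sub_nonneg.2 hs1)) (sub_nonneg.2 hs1)) (by linarith : (0:ℝ) ≤ s + 3)]
  rcases le_or_gt t 2 with hBB | hC
  · -- Case B: 1 < t ≤ 2, use u = t^(1/4)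
    set u := Real.sqrt (Real.sqrt t) with hu
    have ht0 : (0:ℝ) < t := h0
    have hsq0 : 0 < Real.sqrt t := Real.sqrt_pos.2 ht0
    have hu0 : 0 < u := Real.sqrt_pos.2 hsq0
    have hu2 : u ^ 2 = Real.sqrt t := Real.sq_sqrt hsq0.le
    have hu4 : u ^ 4 = t := by
      have := Real.sq_sqrt ht0.le
      nlinarith [hu2]
    have h1t : (1:ℝ) ≤ Real.sqrt t := by
      rw [show (1:ℝ) = Real.sqrt 1 by simp]
      exact Real.sqrt_le_sqrt (by linarith)
    have hu1 : 1 ≤ u := by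
      rw [hu, show (1:ℝ) = Real.sqrt 1 by simp]
      exact Real.sqrt_le_sqrt (by linarith)
    have hst : Real.sqrt t ≤ 1.5 := by
      rw [show (1.5:ℝ) = Real.sqrt 2.25 by
        rw [show (2.25:ℝ) = 1.5 ^ 2 by norm_num, Real.sqrt_sq (by norm_num)]]
      exact Real.sqrt_le_sqrt (by linarith)
    have huU : u ≤ 1.23 := by nlinarith [sq_nonneg (u - 1.23), hu2, hst]
    have hl : 1 - u⁻¹ ≤ Real.log u := Real.one_sub_inv_le_log_of_pos hu0
    have hlog : Real.log t = 4 * Real.log u := by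
      rw [hu, Real.log_sqrt hsq0.le, Real.log_sqrt ht0.le]; ring
    have key : 4 * u ^ 4 - 4 * u ^ 3 ≤ t * Real.log t := by
      rw [hlog, ← hu4]
      have h1 : u ^ 4 * (1 - u⁻¹) = u ^ 4 - u ^ 3 := by field_simp
      nlinarith [mul_le_mul_of_nonneg_left hl (by positivity : (0:ℝ) ≤ 4 * u ^ 4)]
    -- need 4u^4 - 4u^3 ≥ (u^8 + 2u^4 - 3)/4, i.e. (u-1)^2 * q(u) ≤ 0
    have hq : u ^ 6 + 2 * u ^ 5 + 3 * u ^ 4 + 4 * u ^ 3 - 9 * u ^ 2 - 6 * u - 3 ≤ 0 := by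
      nlinarith [mul_nonneg (sub_nonneg.2 hu1) (sub_nonneg.2 huU), sq_nonneg (u - 1), sq_nonneg u, mul_nonneg (mul_nonneg (sub_nonneg.2 hu1) (sub_nonneg.2 huU)) (sq_nonneg u), mul_nonneg (mul_nonneg (sub_nonneg.2 hu1) (sub_nonneg.2 huU)) (mul_nonneg (sub_nonneg.2 hu1) (sub_nonneg.2 huU))]
    nlinarith [key, sq_nonneg (u - 1), mul_nonneg (sq_nonneg (u - 1)) (sq_nonneg u), hq, mul_nonneg (mul_nonneg (sq_nonneg (u-1)) hu0.le) hu0.le]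
  · -- Case C: 2 < t ≤ 4, anchor at e
    have he : Real.exp 1 < 2.7182818286 := Real.exp_one_lt_d9
    have he0 : (0:ℝ) < Real.exp 1 := Real.exp_pos 1
    have hpos : 0 < t / Real.exp 1 := by positivity
    have hl : 1 - (t / Real.exp 1)⁻¹ ≤ Real.log (t / Real.exp 1) :=
      Real.one_sub_inv_le_log_of_pos hpos
    have hlog : Real.log (t / Real.exp 1) = Real.log t - 1 := by
      rw [Real.log_div (by positivity) (by positivity), Real.log_exp]
    have hinv : (t / Real.exp 1)⁻¹ = Real.exp 1 / t := by
      field_simp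
    have hlt : 2 - Real.exp 1 / t ≤ Real.log t := by
      rw [hlog, hinv] at hl; linarith
    have key : 2 * t - Real.exp 1 ≤ t * Real.log t := by
      have := mul_le_mul_of_nonneg_left hlt (le_of_lt h0)
      have h2 : t * (2 - Real.exp 1 / t) = 2 * t - Real.exp 1 := by
        field_simp
      nlinarith [this, h2]
    nlinarith [mul_nonneg (by linarith : (0:ℝ) ≤ t - 2) (by linarith : (0:ℝ) ≤ 4 - t)]

/-- For `x, y, z` satisfying the overlap constraints `|y+z| ≤ 1+x` and `|y-z| ≤ 1-x`,
the function `J⁽²⁾(x,y,z)` is at least `(x² + y² + z²)/4`. -/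
theorem stmt3 (x y z : ℝ) (h1 : |y + z| ≤ 1 + x) (h2 : |y - z| ≤ 1 - x) :
    (x ^ 2 + y ^ 2 + z ^ 2) / 4 ≤
      (1 + x + y + z) / 4 * Real.log (1 + x + y + z)
      + (1 + x - y - z) / 4 * Real.log (1 + x - y - z)
      + (1 - x + y - z) / 4 * Real.log (1 - x + y - z)
      + (1 - x - y + z) / 4 * Real.log (1 - x - y + z) := by
  obtain ⟨h1a, h1b⟩ := abs_le.1 h1
  obtain ⟨h2a, h2b⟩ := abs_le.1 h2
  have ha : (0:ℝ) ≤ 1 + x + y + z := by linarith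
  have hb : (0:ℝ) ≤ 1 + x - y - z := by linarith
  have hc : (0:ℝ) ≤ 1 - x + y - z := by linarith
  have hd : (0:ℝ) ≤ 1 - x - y + z := by linarith
  have ka := tlog_key (1 + x + y + z) ha (by linarith)
  have kb := tlog_key (1 + x - y - z) hb (by linarith)
  have kc := tlog_key (1 - x + y - z) hc (by linarith)
  have kd := tlog_key (1 - x - y + z) hd (by linarith)
  nlinarith [ka, kb, kc, kd]
end

section
/- For a 3×3 symmetric positive-definite matrix B with diagonal entries 1 and off-diagonal entries b_{ij} = R_{ij}² where R_{ij} ∈ [-1,1] are pairwise overlaps of three spin configurations, one has 3 - ⟨1, B⁻¹ 1⟩ ≤ 2(R_{12}² + R_{23}² + R_{31}²), where 1 = (1,1,1)ᵀ. -/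
open Matrix

/-- For the 3×3 SK covariance matrix `B` (unit diagonal, off-diagonal entries `R_{ij}²`
for pairwise overlaps `R_{ij}` of three spin configurations), positive definite,
one has `3 - ⟨1, B⁻¹ 1⟩ ≤ 2(R₁₂² + R₂₃² + R₃₁²)`. -/
theorem stmt4 (N : ℕ) (hN : 0 < N) (σ1 σ2 σ3 : Fin N → ℝ)
    (h1 : ∀ i, σ1 i = 1 ∨ σ1 i = -1)
    (h2 : ∀ i, σ2 i = 1 ∨ σ2 i = -1)
    (h3 : ∀ i, σ3 i = 1 ∨ σ3 i = -1)
    (R12 R23 R31 : ℝ)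
    (hR12 : R12 = (∑ i, σ1 i * σ2 i) / N)
    (hR23 : R23 = (∑ i, σ2 i * σ3 i) / N)
    (hR31 : R31 = (∑ i, σ3 i * σ1 i) / N)
    (B : Matrix (Fin 3) (Fin 3) ℝ)
    (hB : B = !![1, R12 ^ 2, R31 ^ 2; R12 ^ 2, 1, R23 ^ 2; R31 ^ 2, R23 ^ 2, 1])
    (hpd : B.PosDef) :
    3 - (fun _ => (1 : ℝ)) ⬝ᵥ (B⁻¹ *ᵥ fun _ => (1 : ℝ))
      ≤ 2 * (R12 ^ 2 + R23 ^ 2 + R31 ^ 2) := by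
  set o : Fin 3 → ℝ := fun _ => 1 with ho
  set u : Fin 3 → ℝ := B⁻¹ *ᵥ o with hu
  have hdet : IsUnit B.det := hpd.det_pos.ne'.isUnit
  have hBu : B *ᵥ u = o := by
    rw [hu, Matrix.mulVec_mulVec, Matrix.mul_nonsing_inv B hdet, Matrix.one_mulVec]
  have hsym : Bᵀ = B := by rw [hB]; ext i j; fin_cases i <;> fin_cases j <;> simp
  -- quadratic form at o - u is nonneg
  have hq : (0:ℝ) ≤ (o - u) ⬝ᵥ B *ᵥ (o - u) := by
    rcases eq_or_ne (o - u) 0 with h | h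
    · rw [h]; simp
    · exact le_of_lt (by simpa only [star_trivial] using hpd.dotProduct_mulVec_pos h)
  have e1 : u ⬝ᵥ B *ᵥ o = o ⬝ᵥ o := by
    rw [Matrix.dotProduct_mulVec, ← Matrix.mulVec_transpose, hsym, hBu]
  have e2 : o ⬝ᵥ B *ᵥ u = o ⬝ᵥ o := by rw [hBu]
  have e3 : u ⬝ᵥ B *ᵥ u = u ⬝ᵥ o := by rw [hBu]
  have hoo : o ⬝ᵥ o = 3 := by simp [ho, dotProduct, Fin.sum_univ_three]
  have huo : u ⬝ᵥ o = o ⬝ᵥ u := dotProduct_comm _ _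
  have hP : o ⬝ᵥ B *ᵥ o = 3 + 2 * (R12 ^ 2 + R23 ^ 2 + R31 ^ 2) := by
    subst hB
    simp [ho, dotProduct, Matrix.mulVec, Fin.sum_univ_three]
    ring
  have hexp : (o - u) ⬝ᵥ B *ᵥ (o - u)
      = o ⬝ᵥ B *ᵥ o - o ⬝ᵥ B *ᵥ u - u ⬝ᵥ B *ᵥ o + u ⬝ᵥ B *ᵥ u := by
    rw [Matrix.mulVec_sub, sub_dotProduct, dotProduct_sub,
      dotProduct_sub]
    ring
  rw [hexp, hP, e1, e2, e3, hoo, huo] at hq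
  linarith
end
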